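/- Let L > 0, R > 0, k ∈ ℝ^d, γ̃ > 0, and let S ⊆ ℝ^d be measurable with vol(S ∩ Λ_L(k)) ≥ γ̃·L^d. For each j ∈ ℤ^d let u_j : ℝ^d → [0,∞) be measurable with u_j = 0 outside the open ball B_R(j) of radius R around j, and assume Σ_{j∈ℤ^d} u_j(y) ≥ 1 for every y ∈ S. Let Q = Λ_{L+2R}(k) ∩ ℤ^d and N = #Q. Then: (i) the level sets S_j = {y ∈ Λ_L(k) : u_j(y) ≥ 1/N}, j ∈ Q, satisfy ⋃_{j∈Q} S_j ⊇ S ∩ Λ_L(k); and (ii) there exists j ∈ Q such that vol(S_j) ≥ γ̃·L^d/N. -/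
import Mathlib


open MeasureTheory

/-- The open cube `Λ_L(x) = x + (-L/2, L/2)^d` of side length `L` centered at `x`. -/
def cube (d : ℕ) (L : ℝ) (x : Fin d → ℝ) : Set (Fin d → ℝ) :=
  {y | ∀ i, y i ∈ Set.Ioo (x i - L / 2) (x i + L / 2)}

/-- Suppose `vol(S ∩ Λ_L(k)) ≥ γ̃ L^d`, each `u_j ≥ 0` is supported in the open Euclidean
ball `B_R(j)` around the lattice point `j ∈ ℤ^d`, and `Σ_j u_j ≥ 1` on `S`.
Let `Q = Λ_{L+2R}(k) ∩ ℤ^d` and `N = #Q`. Then the level sets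
`S_j = {y ∈ Λ_L(k) : u_j(y) ≥ 1/N}`, `j ∈ Q`, cover `S ∩ Λ_L(k)`, and some `j ∈ Q`
satisfies `vol(S_j) ≥ γ̃ L^d / N`. -/
theorem exists_level_set_large {d : ℕ} (L R : ℝ) (hL : 0 < L) (hR : 0 < R)
    (k : Fin d → ℝ) (tγ : ℝ) (htγ : 0 < tγ)
    (S : Set (Fin d → ℝ)) (hS : MeasurableSet S)
    (hSvol : ENNReal.ofReal (tγ * L ^ d) ≤ volume (S ∩ cube d L k))
    (u : (Fin d → ℤ) → (Fin d → ℝ) → ℝ)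
    (humeas : ∀ j, Measurable (u j)) (hupos : ∀ j y, 0 ≤ u j y)
    (husupp : ∀ (j : Fin d → ℤ) (y : Fin d → ℝ),
      u j y ≠ 0 → ∑ i, (y i - (j i : ℝ)) ^ 2 < R ^ 2)
    (hsum : ∀ y ∈ S, 1 ≤ ∑' j : Fin d → ℤ, ENNReal.ofReal (u j y))
    (Q : Finset (Fin d → ℤ))
    (hQ : ∀ j : Fin d → ℤ, j ∈ Q ↔ (fun i => (j i : ℝ)) ∈ cube d (L + 2 * R) k)
    (N : ℕ) (hN : N = Q.card) :
    (S ∩ cube d L k ⊆ ⋃ j ∈ Q, {y ∈ cube d L k | 1 / (N : ℝ) ≤ u j y}) ∧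
    ∃ j ∈ Q, ENNReal.ofReal (tγ * L ^ d / N) ≤
      volume {y ∈ cube d L k | 1 / (N : ℝ) ≤ u j y} := by
  -- terms vanish outside Q
  have hmemQ : ∀ (j : Fin d → ℤ) (y : Fin d → ℝ), y ∈ cube d L k → u j y ≠ 0 → j ∈ Q := by
    intro j y hy hne
    have hsq := husupp j y hne
    rw [hQ]
    intro i
    have h1 : (y i - (j i : ℝ)) ^ 2 ≤ ∑ i, (y i - (j i : ℝ)) ^ 2 :=
      Finset.single_le_sum (f := fun i => (y i - (j i : ℝ)) ^ 2) (fun i _ => sq_nonneg _) (Finset.mem_univ i)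
    have h2 : (y i - (j i : ℝ)) ^ 2 < R ^ 2 := lt_of_le_of_lt h1 hsq
    have hyi := hy i
    constructor
    · nlinarith [hyi.1, hyi.2]
    · nlinarith [hyi.1, hyi.2]
  have hcover : S ∩ cube d L k ⊆ ⋃ j ∈ Q, {y ∈ cube d L k | 1 / (N : ℝ) ≤ u j y} := by
    intro y hy
    obtain ⟨hyS, hyc⟩ := hy
    have hts : ∑' j : Fin d → ℤ, ENNReal.ofReal (u j y) = ∑ j ∈ Q, ENNReal.ofReal (u j y) := by
      apply tsum_eq_sum
      intro j hj
      have : u j y = 0 := by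
        by_contra hne
        exact hj (hmemQ j y hyc hne)
      simp [this]
    have h1 : (1 : ENNReal) ≤ ∑ j ∈ Q, ENNReal.ofReal (u j y) := by
      rw [← hts]; exact hsum y hyS
    rw [← ENNReal.ofReal_sum_of_nonneg (fun j _ => hupos j y)] at h1
    have hsum1 : (1 : ℝ) ≤ ∑ j ∈ Q, u j y := ENNReal.one_le_ofReal.mp h1
    have hQne : Q.Nonempty := by
      by_contra h
      rw [Finset.not_nonempty_iff_eq_empty] at h
      simp [h] at hsum1
      linarith
    have hNpos : 0 < N := by
      rw [hN]; exact Finset.card_pos.mpr hQne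
    by_contra hcon
    simp only [Set.mem_iUnion, Set.mem_setOf_eq, exists_prop, not_exists, not_and] at hcon
    have hall : ∀ j ∈ Q, u j y < 1 / (N : ℝ) := by
      intro j hj
      by_contra hge
      push_neg at hge
      exact hcon j hj hyc hge
    have : ∑ j ∈ Q, u j y < ∑ j ∈ Q, (1 / (N : ℝ)) :=
      Finset.sum_lt_sum_of_nonempty hQne hall
    rw [Finset.sum_const, hN] at this
    have hNne : ((Q.card : ℝ)) ≠ 0 := by
      rw [← hN]; exact_mod_cast hNpos.ne'
    rw [nsmul_eq_mul, mul_one_div, div_self hNne] at this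
    linarith
  refine ⟨hcover, ?_⟩
  -- Q is nonempty
  have hvpos : 0 < volume (S ∩ cube d L k) := by
    refine lt_of_lt_of_le ?_ hSvol
    exact ENNReal.ofReal_pos.mpr (by positivity)
  obtain ⟨y, hy⟩ := MeasureTheory.nonempty_of_measure_ne_zero hvpos.ne'
  have hj0 := hcover hy
  simp only [Set.mem_iUnion, exists_prop] at hj0
  obtain ⟨j0, hj0Q, -⟩ := hj0
  have hQne : Q.Nonempty := ⟨j0, hj0Q⟩
  have hNpos : 0 < N := by rw [hN]; exact Finset.card_pos.mpr hQne
  have hNR : (0 : ℝ) < N := by exact_mod_cast hNpos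
  have hchain : ENNReal.ofReal (tγ * L ^ d) ≤
      ∑ j ∈ Q, volume {y ∈ cube d L k | 1 / (N : ℝ) ≤ u j y} := by
    calc ENNReal.ofReal (tγ * L ^ d) ≤ volume (S ∩ cube d L k) := hSvol
      _ ≤ volume (⋃ j ∈ Q, {y ∈ cube d L k | 1 / (N : ℝ) ≤ u j y}) := measure_mono hcover
      _ ≤ ∑ j ∈ Q, volume {y ∈ cube d L k | 1 / (N : ℝ) ≤ u j y} :=
          measure_biUnion_finset_le Q _
  obtain ⟨j, hjQ, hjmax⟩ := Q.exists_max_image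
    (fun j => volume {y ∈ cube d L k | 1 / (N : ℝ) ≤ u j y}) hQne
  refine ⟨j, hjQ, ?_⟩
  have h1 : ENNReal.ofReal (tγ * L ^ d) ≤
      N * volume {y ∈ cube d L k | 1 / (N : ℝ) ≤ u j y} := by
    calc ENNReal.ofReal (tγ * L ^ d)
        ≤ ∑ j' ∈ Q, volume {y ∈ cube d L k | 1 / (N : ℝ) ≤ u j' y} := hchain
      _ ≤ ∑ _j' ∈ Q, volume {y ∈ cube d L k | 1 / (N : ℝ) ≤ u j y} :=
          Finset.sum_le_sum (fun j' hj' => hjmax j' hj')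
      _ = N * volume {y ∈ cube d L k | 1 / (N : ℝ) ≤ u j y} := by
          rw [Finset.sum_const, ← hN, nsmul_eq_mul]
  have hdiv : ENNReal.ofReal (tγ * L ^ d / N) = ENNReal.ofReal (tγ * L ^ d) / N := by
    rw [ENNReal.ofReal_div_of_pos hNR, ENNReal.ofReal_natCast]
  rw [hdiv]
  rw [ENNReal.div_le_iff_le_mul (Or.inl (by exact_mod_cast hNpos.ne'))
    (Or.inl (ENNReal.natCast_ne_top N))]
  exact h1.trans_eq (mul_comm _ _)
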